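/- arXiv:2403.05657 — 4 statements merged into one kernel-verified Lean document; each statement's English description precedes it below -/
import Mathlib

section
/- Let x : ℤ → ℤ be a sequence of integers. For every integer i, every integer j with i ≤ j ≤ R_x(i) is a descendant of R_x(i) in the record graph of x (the interval property of the record map). -/
/-- The record map of an integer-valued sequence `x : ℤ → ℤ`: `recordMap x i` is the least
`n > i` such that `∑_{l=i}^{n-1} x l ≥ 0` if such an `n` exists, and `i` otherwise. -/
noncomputable def recordMap (x : ℤ → ℤ) (i : ℤ) : ℤ := by
  classical
  exact if ∃ n, i < n ∧ 0 ≤ ∑ l ∈ Finset.Ico i n, x l then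
    sInf {n : ℤ | i < n ∧ 0 ≤ ∑ l ∈ Finset.Ico i n, x l}
  else i

/-!
If `i < j ≤ R_x(i)`, minimality of `R_x(i)` makes every partial sum `y(i,k)` with `i < k < R_x(i)`
negative, so every tail sum `y(k, R_x(i))` with `j ≤ k < R_x(i)` is nonnegative. A point `k`
whose tail sums up to `m` are all nonnegative jumps to `R_x(k) ∈ (k, m]`, and the new point
inherits the property, so iterating `R_x` from `j` climbs to `m = R_x(i)`.
-/

open Finset

theorem Finset.sum_Ico_add_sum_Ico {α M : Type*} [LinearOrder α] [LocallyFiniteOrder α]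
    [AddCommMonoid M] (f : α → M) {a b c : α} (hab : a ≤ b) (hbc : b ≤ c) :
    ∑ l ∈ Ico a b, f l + ∑ l ∈ Ico b c, f l = ∑ l ∈ Ico a c, f l := by
  rw [← sum_union (Ico_disjoint_Ico_consecutive a b c), Ico_union_Ico_eq_Ico hab hbc]

namespace recordMap

variable {x : ℤ → ℤ} {i n : ℤ}

theorem lt_and_sum_nonneg_of_exists (h : ∃ n, i < n ∧ 0 ≤ ∑ l ∈ Ico i n, x l) :
    i < recordMap x i ∧ 0 ≤ ∑ l ∈ Ico i (recordMap x i), x l := by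
  simp only [recordMap, if_pos h]
  exact Int.csInf_mem h ⟨i, fun _ hm => hm.1.le⟩

theorem le_of_sum_nonneg (hn : i < n) (hsum : 0 ≤ ∑ l ∈ Ico i n, x l) :
    recordMap x i ≤ n := by
  simp only [recordMap, if_pos (⟨n, hn, hsum⟩ : ∃ n, i < n ∧ 0 ≤ ∑ l ∈ Ico i n, x l)]
  exact csInf_le ⟨i, fun _ hm => hm.1.le⟩ ⟨hn, hsum⟩

theorem lt_of_sum_nonneg (hn : i < n) (hsum : 0 ≤ ∑ l ∈ Ico i n, x l) : i < recordMap x i :=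
  (lt_and_sum_nonneg_of_exists ⟨n, hn, hsum⟩).1

theorem sum_Ico_nonneg (h : i < recordMap x i) : 0 ≤ ∑ l ∈ Ico i (recordMap x i), x l := by
  refine (lt_and_sum_nonneg_of_exists ?_).2
  by_contra hne
  simp only [recordMap, if_neg hne] at h
  exact lt_irrefl i h

theorem sum_Ico_neg_of_lt (hin : i < n) (hn : n < recordMap x i) : ∑ l ∈ Ico i n, x l < 0 :=
  not_le.mp fun hsum => (le_of_sum_nonneg hin hsum).not_gt hn

theorem exists_iterate_eq_of_forall_sum_nonneg {j m : ℤ} (hjm : j ≤ m)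
    (htail : ∀ k, j ≤ k → k < m → 0 ≤ ∑ l ∈ Ico k m, x l) :
    ∃ n : ℕ, (recordMap x)^[n] j = m := by
  rcases hjm.eq_or_lt with rfl | hlt
  · exact ⟨0, rfl⟩
  have hj : j < recordMap x j := lt_of_sum_nonneg hlt (htail j le_rfl hlt)
  obtain ⟨n, hn⟩ := exists_iterate_eq_of_forall_sum_nonneg
    (le_of_sum_nonneg hlt (htail j le_rfl hlt)) fun k hk hkm => htail k (hj.le.trans hk) hkm
  exact ⟨n + 1, by rw [Function.iterate_succ_apply, hn]⟩
termination_by (m - j).toNat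
decreasing_by omega

end recordMap

open recordMap in
/-- Interval property of the record map: every integer `j` with `i ≤ j ≤ R_x(i)` is a
descendant of `R_x(i)` in the record graph of `x`. -/
theorem interval_property (x : ℤ → ℤ) (i j : ℤ) (h1 : i ≤ j) (h2 : j ≤ recordMap x i) :
    ∃ n : ℕ, (recordMap x)^[n] j = recordMap x i := by
  rcases h1.eq_or_lt with rfl | hij
  · exact ⟨1, rfl⟩
  refine exists_iterate_eq_of_forall_sum_nonneg h2 fun k hjk hkm => ?_
  have hik : i < k := hij.trans_le hjk
  have hhead := sum_Ico_neg_of_lt hik hkm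
  have htotal := sum_Ico_nonneg (hik.trans hkm)
  rw [← sum_Ico_add_sum_Ico x hik.le hkm.le] at htotal
  linarith
end

section
/- Let x : ℤ → ℤ be a sequence of integers with x_k ≥ -1 for every k ∈ ℤ. Let i be an integer such that y(m,i) < 0 for some m < i, and suppose n := x_{i-1} + 1 > 0, so that i has exactly n children i_n < i_{n-1} < ⋯ < i_1 in the record graph of x. Then for every m with 1 ≤ m ≤ n: (a) the m-th child satisfies m = x_{i-1} + 1 - y(i_m, i); and (b) an integer j < i equals i_m if and only if j is the largest integer below i with y(j,i) = x_{i-1} + 1 - m. -/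
/-- `j` is a child of `i` in the record graph of `x`. -/
noncomputable def IsChild (x : ℤ → ℤ) (i j : ℤ) : Prop :=
  j ≠ i ∧ recordMap x j = i

/-- `j` is the `m`-th child of `i` (children being listed in decreasing order
`i_1 > i_2 > ⋯`), i.e. `j` is a child of `i` and exactly `m - 1` children of `i`
are greater than `j`. -/
noncomputable def IsMthChild (x : ℤ → ℤ) (i : ℤ) (m : ℕ) (j : ℤ) : Prop :=
  IsChild x i j ∧ {k : ℤ | IsChild x i k ∧ j < k}.ncard = m - 1

/-!
The children of `i` are exactly the strict lower records of the backward walk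
`k ↦ y(k,i)` that stay nonnegative, so their `y`-values decrease strictly as the children
move left. Since `x ≥ -1`, this walk moves down by at most one per step as `k` decreases:
starting from `y(i-1,i) = x(i-1)` and eventually falling below `0`, it hits every value
`v ∈ [0, x(i-1)]`, and the first time it does so is a child. Hence the children have precisely the
values `x(i-1), x(i-1) - 1, …, 0`, the `m`-th of them having value `x(i-1) + 1 - m`.
-/

open Finset

/-- A discrete intermediate value theorem for integer sequences increasing by at most one
per step: the last time at or below `v` before `b` is a time at which `v` is hit exactly. -/
theorem Int.exists_eq_forall_lt_of_le_add_one {f : ℤ → ℤ} (hf : ∀ k, f (k + 1) ≤ f k + 1)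
    {a b v : ℤ} (hab : a ≤ b) (ha : f a ≤ v) (hb : v ≤ f b) :
    ∃ c, a ≤ c ∧ c ≤ b ∧ f c = v ∧ ∀ k, c < k → k ≤ b → v < f k := by
  obtain ⟨c, ⟨hcb, hcv⟩, hmax⟩ := Int.exists_greatest_of_bdd
    (P := fun c => c ≤ b ∧ f c ≤ v) ⟨b, fun _ h => h.1⟩ ⟨a, hab, ha⟩
  have hgt : ∀ k, c < k → k ≤ b → v < f k := fun k hck hkb =>
    lt_of_not_ge fun hkv => (hmax k ⟨hkb, hkv⟩).not_gt hck
  refine ⟨c, hmax a ⟨hab, ha⟩, hcb, ?_, hgt⟩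
  rcases hcb.lt_or_eq with hcb | rfl
  · have := hgt (c + 1) (lt_add_one c) hcb
    have := hf c
    omega
  · omega

section RecordGraph

variable (x : ℤ → ℤ)

theorem sum_Ico_eq_add_sum_Ico_add_one {j i : ℤ} (h : j < i) :
    ∑ l ∈ Ico j i, x l = x j + ∑ l ∈ Ico (j + 1) i, x l := by
  rw [Ico_add_one_left_eq_Ioo, add_sum_Ioo_eq_sum_Ico h]

theorem sum_Ico_sub_one_self (i : ℤ) : ∑ l ∈ Ico (i - 1) i, x l = x (i - 1) := by
  rw [sum_Ico_eq_add_sum_Ico_add_one x (sub_one_lt i), sub_add_cancel, Ico_self, sum_empty,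
    add_zero]

theorem recordMap_eq_iff_isLeast {j i : ℤ} (hji : j ≠ i) :
    recordMap x j = i ↔ IsLeast {n | j < n ∧ 0 ≤ ∑ l ∈ Ico j n, x l} i := by
  have hbdd : BddBelow {n | j < n ∧ 0 ≤ ∑ l ∈ Ico j n, x l} := ⟨j, fun _ hn => hn.1.le⟩
  unfold recordMap
  split_ifs with hex
  · refine ⟨fun hinf => ?_, IsLeast.csInf_eq⟩
    exact hinf ▸ ⟨Int.csInf_mem hex hbdd, fun _ hn => csInf_le hbdd hn⟩
  · exact ⟨fun h => absurd h hji, fun h => absurd ⟨i, h.1⟩ hex⟩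

theorem isChild_iff {i j : ℤ} :
    IsChild x i j ↔ j < i ∧ 0 ≤ ∑ l ∈ Ico j i, x l ∧
      ∀ k, j < k → k < i → ∑ l ∈ Ico j i, x l < ∑ l ∈ Ico k i, x l := by
  have hsplit : ∀ k, j < k → k < i →
      ∑ l ∈ Ico j k, x l + ∑ l ∈ Ico k i, x l = ∑ l ∈ Ico j i, x l :=
    fun k hjk hki => sum_Ico_add_sum_Ico x hjk.le hki.le
  constructor
  · rintro ⟨hji, hrec⟩
    obtain ⟨⟨hlt, hnonneg⟩, hleast⟩ := (recordMap_eq_iff_isLeast x hji).1 hrec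
    refine ⟨hlt, hnonneg, fun k hjk hki => ?_⟩
    have hneg : ∑ l ∈ Ico j k, x l < 0 :=
      lt_of_not_ge fun hk => (hleast ⟨hjk, hk⟩).not_gt hki
    linarith [hsplit k hjk hki]
  · rintro ⟨hji, hnonneg, hrec⟩
    refine ⟨hji.ne, (recordMap_eq_iff_isLeast x hji.ne).2 ⟨⟨hji, hnonneg⟩, ?_⟩⟩
    rintro k ⟨hjk, hk⟩
    by_contra! hki
    linarith [hsplit k hjk hki, hrec k hjk hki]

variable {x}

theorem sum_Ico_le_of_isChild {i j : ℤ} (hj : IsChild x i j) :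
    ∑ l ∈ Ico j i, x l ≤ x (i - 1) := by
  obtain ⟨hji, -, hrec⟩ := (isChild_iff x).1 hj
  rcases (Int.le_sub_one_of_lt hji).lt_or_eq with hlt | rfl
  · simpa only [sum_Ico_sub_one_self] using (hrec (i - 1) hlt (sub_one_lt i)).le
  · exact (sum_Ico_sub_one_self x i).le

theorem strictMonoOn_sum_Ico_isChild (i : ℤ) :
    StrictMonoOn (fun k => ∑ l ∈ Ico k i, x l) {k | IsChild x i k} :=
  fun _ hj k hk hjk => ((isChild_iff x).1 hj).2.2 k hjk ((isChild_iff x).1 hk).1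

section SkipFree

variable (hx : ∀ k, -1 ≤ x k)
include hx

theorem sum_Ico_add_one_le (k i : ℤ) :
    ∑ l ∈ Ico (k + 1) i, x l ≤ ∑ l ∈ Ico k i, x l + 1 := by
  rcases lt_or_ge k i with hki | hik
  · rw [sum_Ico_eq_add_sum_Ico_add_one x hki]
    linarith [hx k]
  · rw [Ico_eq_empty_of_le hik, Ico_eq_empty_of_le (by omega)]
    simp

theorem isChild_and_sum_Ico_eq_iff {i j v : ℤ} (hv0 : 0 ≤ v) (hv : v ≤ x (i - 1)) (hji : j < i) :
    IsChild x i j ∧ ∑ l ∈ Ico j i, x l = v ↔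
      ∑ l ∈ Ico j i, x l = v ∧ ∀ k, j < k → k < i → ∑ l ∈ Ico k i, x l ≠ v := by
  constructor
  · rintro ⟨hj, rfl⟩
    exact ⟨rfl, fun k hjk hki => (((isChild_iff x).1 hj).2.2 k hjk hki).ne'⟩
  · rintro ⟨rfl, hne⟩
    refine ⟨(isChild_iff x).2 ⟨hji, hv0, fun k hjk hki => ?_⟩, rfl⟩
    by_contra! hk
    obtain ⟨c, hkc, hci, hc, -⟩ := Int.exists_eq_forall_lt_of_le_add_one
      (sum_Ico_add_one_le hx · i) (Int.le_sub_one_of_lt hki) hk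
      (by rwa [sum_Ico_sub_one_self])
    exact hne c (hjk.trans_le hkc) (by omega) hc

variable {i : ℤ} (hneg : ∃ m < i, ∑ l ∈ Ico m i, x l < 0)
include hneg

theorem exists_isChild_sum_Ico_eq {v : ℤ} (hv0 : 0 ≤ v) (hv : v ≤ x (i - 1)) :
    ∃ j, IsChild x i j ∧ ∑ l ∈ Ico j i, x l = v := by
  obtain ⟨m, hmi, hm⟩ := hneg
  obtain ⟨j, -, hji, hj, hgt⟩ := Int.exists_eq_forall_lt_of_le_add_one
    (sum_Ico_add_one_le hx · i) (Int.le_sub_one_of_lt hmi) (hm.le.trans hv0)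
    (by rwa [sum_Ico_sub_one_self])
  refine ⟨j, (isChild_iff x).2 ⟨by omega, hj ▸ hv0, fun k hjk hki => ?_⟩, hj⟩
  exact hj ▸ hgt k hjk (by omega)

/-- The children to the right of a child `j` are in bijection with the values in
`(y(j,i), x(i-1)]`. -/
theorem ncard_isChild_gt {j : ℤ} (hj : IsChild x i j) :
    ({k | IsChild x i k ∧ j < k}.ncard : ℤ) = x (i - 1) - ∑ l ∈ Ico j i, x l := by
  have hmono := strictMonoOn_sum_Ico_isChild (x := x) i
  have himage : (fun k => ∑ l ∈ Ico k i, x l) '' {k | IsChild x i k ∧ j < k} =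
      ↑(Ioc (∑ l ∈ Ico j i, x l) (x (i - 1))) := by
    ext w
    simp only [Set.mem_image, coe_Ioc, Set.mem_Ioc]
    constructor
    · rintro ⟨k, ⟨hk, hjk⟩, rfl⟩
      exact ⟨hmono hj hk hjk, sum_Ico_le_of_isChild hk⟩
    · rintro ⟨hjw, hw⟩
      have hv0 := ((isChild_iff x).1 hj).2.1
      obtain ⟨k, hk, rfl⟩ := exists_isChild_sum_Ico_eq hx hneg (hv0.trans hjw.le) hw
      exact ⟨k, ⟨hk, (hmono.lt_iff_lt hj hk).1 hjw⟩, rfl⟩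
  have hinj : Set.InjOn (fun k => ∑ l ∈ Ico k i, x l) {k | IsChild x i k ∧ j < k} :=
    hmono.injOn.mono fun _ hk => hk.1
  rw [← hinj.ncard_image, himage, Set.ncard_coe_finset, Int.card_Ioc, Int.toNat_of_nonneg]
  exact sub_nonneg.2 (sum_Ico_le_of_isChild hj)

theorem isMthChild_iff {m : ℕ} (hm : 1 ≤ m) {j : ℤ} :
    IsMthChild x i m j ↔ IsChild x i j ∧ ∑ l ∈ Ico j i, x l = x (i - 1) + 1 - m := by
  refine and_congr_right fun hj => ?_
  have hcard := ncard_isChild_gt hx hneg hj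
  omega

end SkipFree

end RecordGraph

theorem mth_child_characterization_general (x : ℤ → ℤ) (hx : ∀ k : ℤ, -1 ≤ x k) (i : ℤ)
    (h : ∃ m < i, ∑ l ∈ Finset.Ico m i, x l < 0)
    (m : ℕ) (hm1 : 1 ≤ m) (hm2 : (m : ℤ) ≤ x (i - 1) + 1) :
    (∀ j : ℤ, IsMthChild x i m j →
        (m : ℤ) = x (i - 1) + 1 - ∑ l ∈ Finset.Ico j i, x l) ∧
    (∀ j : ℤ, j < i →
        (IsMthChild x i m j ↔
          (∑ l ∈ Finset.Ico j i, x l = x (i - 1) + 1 - m ∧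
            ∀ k : ℤ, j < k → k < i →
              ∑ l ∈ Finset.Ico k i, x l ≠ x (i - 1) + 1 - m))) := by
  refine ⟨fun j hj => ?_, fun j hji => ?_⟩
  · have := ((isMthChild_iff hx h hm1).1 hj).2
    omega
  · rw [isMthChild_iff hx h hm1]
    exact isChild_and_sum_Ico_eq_iff hx (by omega) (by omega) hji

/-- Positions of the children for a skip-free to the left sequence: if some past partial sum
`y(m,i)` is negative and `n := x (i-1) + 1 > 0` (so `i` has exactly `n` children
`i_n < ⋯ < i_1`), then for every `1 ≤ m ≤ n`: (a) the `m`-th child `i_m` satisfies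
`m = x (i-1) + 1 - y(i_m, i)`; and (b) an integer `j < i` is the `m`-th child of `i` iff `j`
is the largest integer below `i` with `y(j,i) = x (i-1) + 1 - m`. -/
theorem mth_child_characterization (x : ℤ → ℤ) (hx : ∀ k : ℤ, -1 ≤ x k) (i : ℤ)
    (h : ∃ m < i, ∑ l ∈ Finset.Ico m i, x l < 0)
    (hn : 0 < x (i - 1) + 1)
    (m : ℕ) (hm1 : 1 ≤ m) (hm2 : (m : ℤ) ≤ x (i - 1) + 1) :
    (∀ j : ℤ, IsMthChild x i m j →
        (m : ℤ) = x (i - 1) + 1 - ∑ l ∈ Finset.Ico j i, x l) ∧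
    (∀ j : ℤ, j < i →
        (IsMthChild x i m j ↔
          (∑ l ∈ Finset.Ico j i, x l = x (i - 1) + 1 - m ∧
            ∀ k : ℤ, j < k → k < i →
              ∑ l ∈ Finset.Ico k i, x l ≠ x (i - 1) + 1 - m))) :=
  mth_child_characterization_general x hx i h m hm1 hm2
end

section
/- Let (X_n)_{n ≥ 0} be an i.i.d. sequence of integer-valued random variables with ℙ[X_0 ≥ -1] = 1 and ℙ[X_0 = -1] > 0, whose mean exists and lies in (0, ∞]. Then ∑_{k = -1}^{∞} ℙ[X_0 = k] · c^k = 1, where c = ℙ[∃ n ≥ 0, S_n = -1] ∈ (0, 1]. (Equivalently, k ↦ ℙ[X_0 = k] c^k is a probability distribution on {-1, 0, 1, 2, …}.) -/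
/-!
Write `c j` for the probability that the walk ever reaches `-j`. Since the steps are `≥ -1`, the
walk cannot jump over a level on its way down: to reach `-(i + j)` it must first reach `-i`, at
some time `M`, and by independence the walk after `M` is a fresh copy of the walk. Summing over
`M` gives `c (i + j) = c i * c j`, so `c j = c ^ j` with `c = c 1`. Conditioning on the first step
in the same way gives `c = ∑ₙ ℙ[X₀ = n - 1] * cⁿ`, and dividing by `c ≥ ℙ[X₀ = -1] > 0` gives
`∑ₙ ℙ[X₀ = n - 1] * c ^ (n - 1) = 1`.
-/

open MeasureTheory ProbabilityTheory Finset

theorem ENNReal.tsum_mul_zpow_sub_one_eq_one {p : ℕ → ENNReal} {c : ENNReal} (hc0 : c ≠ 0)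
    (hctop : c ≠ ⊤) (h : c = ∑' n : ℕ, p n * c ^ n) :
    ∑' n : ℕ, p n * c ^ ((n : ℤ) - 1) = 1 := by
  have hpow : ∀ n : ℕ, c ^ n = c * c ^ ((n : ℤ) - 1) := fun n => by
    simpa using ENNReal.zpow_add hc0 hctop 1 ((n : ℤ) - 1)
  refine (ENNReal.mul_right_inj hc0 hctop).mp ?_
  rw [mul_one, ← ENNReal.tsum_mul_left]
  conv_rhs => rw [h]
  exact tsum_congr fun n => by rw [hpow]; ring

namespace SkipFreeWalk

def reaches (a : ℤ) : Set (ℕ → ℤ) := {x | ∃ m, ∑ l ∈ range m, x l = a}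

def firstHitAt (a : ℤ) (M : ℕ) : Set (ℕ → ℤ) :=
  {x | ∑ l ∈ range M, x l = a ∧ ∀ m < M, ∑ l ∈ range m, x l ≠ a}

def shift {β : Type*} (M : ℕ) (x : ℕ → β) : ℕ → β := fun n => x (M + n)

theorem reaches_eq_iUnion_firstHitAt (a : ℤ) : reaches a = ⋃ M, firstHitAt a M := by
  ext x
  simp only [reaches, firstHitAt, Set.mem_ofPred_eq, Set.mem_iUnion]
  refine ⟨fun hx => ⟨Nat.find hx, Nat.find_spec hx, fun m => Nat.find_min hx⟩, ?_⟩
  rintro ⟨M, hM, -⟩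
  exact ⟨M, hM⟩

theorem pairwise_disjoint_firstHitAt (a : ℤ) :
    Pairwise (Function.onFun Disjoint (firstHitAt a)) := by
  intro M M' hne
  wlog hlt : M < M' generalizing M M'
  · exact (this hne.symm (by omega)).symm
  exact Set.disjoint_left.mpr fun x hM hM' => hM'.2 M hlt hM.1

theorem reaches_zero : reaches 0 = Set.univ :=
  Set.eq_univ_of_forall fun x => ⟨0, sum_range_zero x⟩

theorem measurableSet_reaches (a : ℤ) : MeasurableSet (reaches a) := by
  simp only [reaches, Set.ofPred_exists]
  exact MeasurableSet.iUnion fun m =>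
    (Finset.measurable_sum _ fun l _ => measurable_pi_apply l) (measurableSet_singleton a)

theorem exists_le_eq_of_sub_one_le (f : ℕ → ℤ) (hf : ∀ n, f n - 1 ≤ f (n + 1)) {t : ℤ} {m : ℕ}
    (hm : f m ≤ t) (h0 : t ≤ f 0) : ∃ k ≤ m, f k = t := by
  induction m with
  | zero => exact ⟨0, le_rfl, le_antisymm hm h0⟩
  | succ m ih =>
    by_cases h : f m ≤ t
    · obtain ⟨k, hk, hfk⟩ := ih h
      exact ⟨k, by omega, hfk⟩
    · exact ⟨m + 1, le_rfl, by have := hf m; omega⟩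

theorem mem_reaches_add_iff {x : ℕ → ℤ} (hx : ∀ n, -1 ≤ x n) (i j : ℕ) :
    x ∈ reaches (-(i + j)) ↔ ∃ M, x ∈ firstHitAt (-i) M ∧ shift M x ∈ reaches (-j) := by
  constructor
  · rintro ⟨m, hm⟩
    obtain ⟨k, hkm, hk⟩ := exists_le_eq_of_sub_one_le (fun n => ∑ l ∈ range n, x l)
      (fun n => by have := hx n; simp only [sum_range_succ]; omega) (t := -i) (m := m)
      (by omega) (by simp)
    have hi : x ∈ reaches (-i) := ⟨k, hk⟩
    rw [reaches_eq_iUnion_firstHitAt, Set.mem_iUnion] at hi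
    obtain ⟨M, hM⟩ := hi
    have hMm : M ≤ m := by
      by_contra! h
      exact hM.2 k (by omega) hk
    refine ⟨M, hM, m - M, ?_⟩
    have hsplit := sum_range_add x M (m - M)
    rw [Nat.add_sub_cancel' hMm, hm, hM.1] at hsplit
    simp only [shift]
    omega
  · rintro ⟨M, hM, m, hm⟩
    refine ⟨M + m, ?_⟩
    rw [sum_range_add, hM.1]
    simp only [shift] at hm
    omega

theorem mem_reaches_neg_one_iff {x : ℕ → ℤ} (hx : -1 ≤ x 0) :
    x ∈ reaches (-1) ↔ ∃ n : ℕ, x 0 = n - 1 ∧ shift 1 x ∈ reaches (-n) := by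
  constructor
  · rintro ⟨m, hm⟩
    obtain ⟨m, rfl⟩ : ∃ k, m = 1 + k := ⟨m - 1, by
      rcases m with _ | m
      · simp at hm
      · omega⟩
    rw [sum_range_add, sum_range_one] at hm
    refine ⟨(x 0 + 1).toNat, by omega, m, ?_⟩
    simp only [shift]
    omega
  · rintro ⟨n, hn, m, hm⟩
    refine ⟨1 + m, ?_⟩
    rw [sum_range_add, sum_range_one]
    simp only [shift] at hm
    omega

variable {Ω β : Type*} [MeasurableSpace β]

abbrev past (X : ℕ → Ω → β) (M : ℕ) : MeasurableSpace Ω :=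
  ⨆ i ∈ Set.Iio M, MeasurableSpace.comap (X i) inferInstance

abbrev future (X : ℕ → Ω → β) (M : ℕ) : MeasurableSpace Ω :=
  ⨆ i ∈ Set.Ici M, MeasurableSpace.comap (X i) inferInstance

theorem measurable_past {X : ℕ → Ω → β} {l M : ℕ} (hl : l < M) : Measurable[past X M] (X l) :=
  Measurable.of_comap_le <|
    le_iSup₂ (f := fun i (_ : i ∈ Set.Iio M) => MeasurableSpace.comap (X i) inferInstance) l hl

theorem measurable_shift_future {X : ℕ → Ω → β} (M : ℕ) :
    Measurable[future X M] fun ω => shift M (fun n => X n ω) :=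
  @measurable_pi_lambda _ _ _ (future X M) _ _ fun n => Measurable.of_comap_le <|
    le_iSup₂ (f := fun i (_ : i ∈ Set.Ici M) => MeasurableSpace.comap (X i) inferInstance)
      (M + n) (by simp)

theorem measurableSet_firstHitAt_past {X : ℕ → Ω → ℤ} (a : ℤ) (M : ℕ) :
    MeasurableSet[past X M] ((fun ω n => X n ω) ⁻¹' firstHitAt a M) := by
  have hS : ∀ m ≤ M, Measurable[past X M] fun ω => ∑ l ∈ range m, X l ω := fun m hm =>
    Finset.measurable_sum _ fun l hl => measurable_past (by simp at hl; omega)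
  have hset : (fun ω n => X n ω) ⁻¹' firstHitAt a M =
      {ω | ∑ l ∈ range M, X l ω = a} ∩ ⋂ m ∈ Set.Iio M, {ω | ∑ l ∈ range m, X l ω = a}ᶜ := by
    ext ω
    simp [firstHitAt]
  rw [hset]
  exact (hS M le_rfl (measurableSet_singleton a)).inter <| .biInter (Set.to_countable _)
    fun m hm => (hS m (le_of_lt hm) (measurableSet_singleton a)).compl

section Markov

variable [MeasurableSpace Ω] {μ : Measure Ω} {X : ℕ → Ω → β}

theorem past_le (hmeas : ∀ n, Measurable (X n)) (M : ℕ) : past X M ≤ ‹MeasurableSpace Ω› :=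
  iSup₂_le fun i _ => (hmeas i).comap_le

theorem measurable_shift (hmeas : ∀ n, Measurable (X n)) (M : ℕ) :
    Measurable fun ω => shift M (fun n => X n ω) :=
  measurable_pi_lambda _ fun n => hmeas (M + n)

theorem indep_past_future (hmeas : ∀ n, Measurable (X n)) (hindep : iIndepFun X μ) (M : ℕ) :
    Indep (past X M) (future X M) μ :=
  indep_iSup_of_disjoint (fun i => (hmeas i).comap_le) ((iIndepFun_iff_iIndep _ _ _).mp hindep)
    (Set.Iio_disjoint_Ici le_rfl)

theorem map_shift_eq_infinitePi (hmeas : ∀ n, Measurable (X n)) (hindep : iIndepFun X μ)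
    (hident : ∀ n, IdentDistrib (X n) (X 0) μ μ) (M : ℕ) :
    μ.map (fun ω => shift M (fun n => X n ω)) = Measure.infinitePi fun _ => μ.map (X 0) := by
  change μ.map (fun ω n => X (M + n) ω) = _
  rw [(hindep.precomp (add_right_injective M)).map_fun_eq_infinitePi_map fun n => hmeas _]
  simp only [(hident _).map_eq]

theorem measure_shift_preimage (hmeas : ∀ n, Measurable (X n)) (hindep : iIndepFun X μ)
    (hident : ∀ n, IdentDistrib (X n) (X 0) μ μ) (M : ℕ) {B : Set (ℕ → β)}
    (hB : MeasurableSet B) :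
    μ ((fun ω => shift M (fun n => X n ω)) ⁻¹' B) = μ ((fun ω n => X n ω) ⁻¹' B) := by
  have hpath : (fun ω n => X n ω) = fun ω => shift 0 (fun n => X n ω) := by
    ext ω n
    simp [shift]
  rw [hpath, ← Measure.map_apply (measurable_shift hmeas M) hB,
    ← Measure.map_apply (measurable_shift hmeas 0) hB,
    map_shift_eq_infinitePi hmeas hindep hident, map_shift_eq_infinitePi hmeas hindep hident]

/-- Markov property at the deterministic time `M`. -/
theorem measure_inter_shift_preimage (hmeas : ∀ n, Measurable (X n)) (hindep : iIndepFun X μ)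
    (hident : ∀ n, IdentDistrib (X n) (X 0) μ μ) {M : ℕ} {E : Set Ω}
    (hE : MeasurableSet[past X M] E) {B : Set (ℕ → β)} (hB : MeasurableSet B) :
    μ (E ∩ (fun ω => shift M (fun n => X n ω)) ⁻¹' B) = μ E * μ ((fun ω n => X n ω) ⁻¹' B) := by
  rw [(Indep_iff _ _ μ).mp (indep_past_future hmeas hindep M) _ _ hE
    (measurable_shift_future M hB), measure_shift_preimage hmeas hindep hident M hB]

end Markov

variable [MeasurableSpace Ω] {μ : Measure Ω} {X : ℕ → Ω → ℤ}

theorem ae_neg_one_le (hident : ∀ n, IdentDistrib (X n) (X 0) μ μ)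
    (hskip : ∀ᵐ ω ∂μ, -1 ≤ X 0 ω) : ∀ᵐ ω ∂μ, ∀ n, -1 ≤ X n ω :=
  ae_all_iff.mpr fun n => (hident n).symm.ae_mem_snd (t := Set.Ici (-1)) measurableSet_Ici hskip

variable (μ X) in
noncomputable def hitProb (a : ℤ) : ENNReal := μ ((fun ω n => X n ω) ⁻¹' reaches a)

theorem hitProb_eq_tsum_firstHitAt (hmeas : ∀ n, Measurable (X n)) (a : ℤ) :
    hitProb μ X a = ∑' M, μ ((fun ω n => X n ω) ⁻¹' firstHitAt a M) := by
  rw [hitProb, reaches_eq_iUnion_firstHitAt, Set.preimage_iUnion,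
    measure_iUnion (fun M M' h => ((pairwise_disjoint_firstHitAt a) h).preimage _)
      fun M => past_le hmeas M _ (measurableSet_firstHitAt_past a M)]

section
variable (hmeas : ∀ n, Measurable (X n)) (hindep : iIndepFun X μ)
  (hident : ∀ n, IdentDistrib (X n) (X 0) μ μ) (hskip : ∀ᵐ ω ∂μ, -1 ≤ X 0 ω)
include hmeas hindep hident hskip

theorem hitProb_neg_add (i j : ℕ) :
    hitProb μ X (-((i + j : ℕ) : ℤ)) = hitProb μ X (-i) * hitProb μ X (-j) := by
  have hdecomp : (fun ω n => X n ω) ⁻¹' reaches (-((i + j : ℕ) : ℤ)) =ᵐ[μ]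
      ⋃ M, (fun ω n => X n ω) ⁻¹' firstHitAt (-i) M ∩
        (fun ω => shift M (fun n => X n ω)) ⁻¹' reaches (-j) := by
    refine Filter.eventuallyEq_set.mpr ?_
    filter_upwards [ae_neg_one_le hident hskip] with ω hω
    simp only [Set.mem_preimage, Set.mem_iUnion, Set.mem_inter_iff]
    push_cast
    exact mem_reaches_add_iff hω i j
  rw [hitProb, measure_congr hdecomp, measure_iUnion, hitProb_eq_tsum_firstHitAt hmeas,
    ← ENNReal.tsum_mul_right]
  · exact tsum_congr fun M => measure_inter_shift_preimage hmeas hindep hident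
      (measurableSet_firstHitAt_past _ M) (measurableSet_reaches _)
  · exact fun M M' h => (((pairwise_disjoint_firstHitAt _) h).preimage _).mono
      Set.inter_subset_left Set.inter_subset_left
  · exact fun M => (past_le hmeas M _ (measurableSet_firstHitAt_past _ M)).inter
      (measurable_shift hmeas M (measurableSet_reaches _))

theorem hitProb_neg_natCast [IsProbabilityMeasure μ] (n : ℕ) :
    hitProb μ X (-n) = hitProb μ X (-1) ^ n := by
  induction n with
  | zero => simp [hitProb, reaches_zero]
  | succ n ih =>
    rw [hitProb_neg_add hmeas hindep hident hskip n 1, ih, pow_succ, Nat.cast_one]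

theorem hitProb_neg_one_eq_tsum :
    hitProb μ X (-1) = ∑' n : ℕ, μ {ω | X 0 ω = n - 1} * hitProb μ X (-n) := by
  have hdecomp : (fun ω n => X n ω) ⁻¹' reaches (-1) =ᵐ[μ]
      ⋃ n : ℕ, {ω | X 0 ω = n - 1} ∩ (fun ω => shift 1 (fun n => X n ω)) ⁻¹' reaches (-n) := by
    refine Filter.eventuallyEq_set.mpr ?_
    filter_upwards [hskip] with ω hω
    simp only [Set.mem_preimage, Set.mem_iUnion, Set.mem_inter_iff]
    exact mem_reaches_neg_one_iff hω
  have hX0 : ∀ n : ℕ, MeasurableSet[past X 1] {ω | X 0 ω = n - 1} := fun n =>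
    measurable_past zero_lt_one (measurableSet_singleton _)
  rw [hitProb, measure_congr hdecomp, measure_iUnion]
  · exact tsum_congr fun n => measure_inter_shift_preimage hmeas hindep hident
      (hX0 n) (measurableSet_reaches _)
  · intro n n' h
    refine Set.disjoint_left.mpr fun ω hn hn' => h ?_
    have := hn.1.symm.trans hn'.1
    omega
  · exact fun n => (past_le hmeas 1 _ (hX0 n)).inter
      (measurable_shift hmeas 1 (measurableSet_reaches _))

end

end SkipFreeWalk

open SkipFreeWalk

theorem doob_transform_prob_dist_general {Ω : Type*} [MeasurableSpace Ω] (μ : Measure Ω)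
    [IsProbabilityMeasure μ] (X : ℕ → Ω → ℤ)
    (hmeas : ∀ n, Measurable (X n))
    (hindep : iIndepFun X μ)
    (hident : ∀ n, IdentDistrib (X n) (X 0) μ μ)
    (hskip : ∀ᵐ ω ∂μ, -1 ≤ X 0 ω)
    (hminus : 0 < μ {ω | X 0 ω = -1}) :
    0 < μ {ω | ∃ m : ℕ, ∑ l ∈ Finset.range m, X l ω = -1} ∧
      μ {ω | ∃ m : ℕ, ∑ l ∈ Finset.range m, X l ω = -1} ≤ 1 ∧
      (∑' n : ℕ,
          μ {ω | X 0 ω = (n : ℤ) - 1} *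
            (μ {ω | ∃ m : ℕ, ∑ l ∈ Finset.range m, X l ω = -1}) ^ ((n : ℤ) - 1)) = 1 := by
  change 0 < hitProb μ X (-1) ∧ hitProb μ X (-1) ≤ 1 ∧
    ∑' n : ℕ, μ {ω | X 0 ω = (n : ℤ) - 1} * hitProb μ X (-1) ^ ((n : ℤ) - 1) = 1
  have hpos : 0 < hitProb μ X (-1) :=
    hminus.trans_le <| measure_mono fun ω hω => ⟨1, by simpa using hω⟩
  refine ⟨hpos, prob_le_one, ENNReal.tsum_mul_zpow_sub_one_eq_one hpos.ne' (measure_ne_top _ _) ?_⟩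
  refine (hitProb_neg_one_eq_tsum hmeas hindep hident hskip).trans (tsum_congr fun n => ?_)
  rw [hitProb_neg_natCast hmeas hindep hident hskip]

/-- For a skip-free to the left random walk with `ℙ[X_0 = -1] > 0` whose mean exists and
lies in `(0, ∞]`, one has `c ∈ (0, 1]` and `∑_{k=-1}^∞ ℙ[X_0 = k] c^k = 1` (the sum being
reindexed by `k = n - 1`, `n : ℕ`), where `c = ℙ[∃ n, S_n = -1]`; that is,
`k ↦ ℙ[X_0 = k] c^k` is a probability distribution on `{-1, 0, 1, 2, …}`. -/
theorem doob_transform_prob_dist {Ω : Type*} [MeasurableSpace Ω] (μ : Measure Ω)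
    [IsProbabilityMeasure μ] (X : ℕ → Ω → ℤ)
    (hmeas : ∀ n, Measurable (X n))
    (hindep : iIndepFun X μ)
    (hident : ∀ n, IdentDistrib (X n) (X 0) μ μ)
    (hskip : ∀ᵐ ω ∂μ, -1 ≤ X 0 ω)
    (hminus : 0 < μ {ω | X 0 ω = -1})
    (hnegpart : Integrable (fun ω => max (-(X 0 ω : ℝ)) 0) μ)
    (hmean : ¬ Integrable (fun ω => (X 0 ω : ℝ)) μ ∨ 0 < ∫ ω, (X 0 ω : ℝ) ∂μ) :
    0 < μ {ω | ∃ m : ℕ, ∑ l ∈ Finset.range m, X l ω = -1} ∧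
      μ {ω | ∃ m : ℕ, ∑ l ∈ Finset.range m, X l ω = -1} ≤ 1 ∧
      (∑' n : ℕ,
          μ {ω | X 0 ω = (n : ℤ) - 1} *
            (μ {ω | ∃ m : ℕ, ∑ l ∈ Finset.range m, X l ω = -1}) ^ ((n : ℤ) - 1)) = 1 :=
  doob_transform_prob_dist_general μ X hmeas hindep hident hskip hminus
end

section
/- Let (X_n)_{n ≥ 0} be an i.i.d. sequence of integer-valued random variables with ℙ[X_0 ≥ -1] = 1, integrable and with E[X_0] < 0, and let (S_n) be the associated skip-free to the left random walk. Then the probability that the walk never attains a nonnegative value after time 0 equals minus the mean: ℙ[S_n < 0 for all n ≥ 1] = -E[X_0]. -/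
/-!
Since the increments are at least `-1`, the running minimum `min_{j ≤ n} S_j` drops by exactly one
at each strict descending ladder epoch, so `-min_{j ≤ n} S_j` counts the ladder epochs in
`1, …, n`. Reading the first `k` increments backwards turns the walk into `t ↦ S_k - S_{k-t}`,
and an i.i.d. sequence keeps its law under this reindexing; hence `k` is a ladder epoch with the
same probability as `S_1, …, S_k < 0`. Taking expectations,
`E[-min_{j ≤ n} S_j] = ∑_{k ≤ n} P(S_1, …, S_k < 0)`. Divided by `n`, the right side is a Cesàro
mean of probabilities decreasing to `P(S_n < 0 for all n ≥ 1)`, while by the strong law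
`min_{j ≤ n} S_j / n → E[X_0]` almost surely (the mean being nonpositive), so by dominated
convergence the left side tends to `-E[X_0]`.
-/

open MeasureTheory ProbabilityTheory Filter Finset Topology

def runningMin {α : Type*} [LinearOrder α] (s : ℕ → α) : ℕ → α
  | 0 => s 0
  | n + 1 => min (runningMin s n) (s (n + 1))

section RunningMin

variable {α : Type*} [LinearOrder α] (s : ℕ → α)

lemma runningMin_le {j n : ℕ} (h : j ≤ n) : runningMin s n ≤ s j := by
  induction n with
  | zero => rw [Nat.le_zero.mp h]; rfl
  | succ n ih =>
    rcases h.lt_or_eq with h | rfl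
    · exact (min_le_left _ _).trans (ih (Nat.lt_succ_iff.mp h))
    · exact min_le_right _ _

lemma exists_runningMin_eq (n : ℕ) : ∃ j ≤ n, runningMin s n = s j := by
  induction n with
  | zero => exact ⟨0, le_rfl, rfl⟩
  | succ n ih =>
    obtain ⟨j, hjn, hj⟩ := ih
    rcases min_choice (runningMin s n) (s (n + 1)) with h | h
    · exact ⟨j, hjn.trans n.le_succ, h.trans hj⟩
    · exact ⟨n + 1, le_rfl, h⟩

lemma lt_runningMin_iff {a : α} {n : ℕ} : a < runningMin s n ↔ ∀ j ≤ n, a < s j := by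
  refine ⟨fun h j hj ↦ h.trans_le (runningMin_le s hj), fun h ↦ ?_⟩
  obtain ⟨j, hjn, hj⟩ := exists_runningMin_eq s n
  exact hj ▸ h j hjn

lemma Monotone.runningMin_comp {β : Type*} [LinearOrder β] {f : α → β} (hf : Monotone f)
    (n : ℕ) : runningMin (fun n ↦ f (s n)) n = f (runningMin s n) := by
  induction n with
  | zero => rfl
  | succ n ih => simp only [runningMin, ih, hf.map_min]

end RunningMin

lemma Measurable.runningMin {δ α : Type*} [MeasurableSpace δ] [TopologicalSpace α]
    [MeasurableSpace α] [OpensMeasurableSpace α] [LinearOrder α] [SecondCountableTopology α]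
    [OrderClosedTopology α] {f : ℕ → δ → α} (hf : ∀ n, Measurable (f n)) (n : ℕ) :
    Measurable fun x ↦ _root_.runningMin (f · x) n := by
  induction n with
  | zero => exact hf 0
  | succ n ih => exact ih.min (hf (n + 1))

lemma sub_runningMin_eq_card_ladder (s : ℕ → ℤ) (hs : ∀ n, s n - 1 ≤ s (n + 1)) (n : ℕ) :
    s 0 - runningMin s n = #{k ∈ range n | ∀ j ≤ k, s (k + 1) < s j} := by
  induction n with
  | zero => simp [runningMin]
  | succ n ih =>
    rw [Finset.natCast_card_filter] at ih ⊢
    rw [sum_range_succ, ← ih]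
    -- a new strict minimum undercuts the old one by exactly `1`, as `s (n + 1) ≥ s n - 1`
    have hmin : runningMin s n ≤ s n := runningMin_le s le_rfl
    have hstep := hs n
    simp only [runningMin]
    split_ifs with hladder
    · have := (lt_runningMin_iff s).2 hladder
      omega
    · have := mt (lt_runningMin_iff s).1 hladder
      omega

lemma tendsto_runningMin_div_of_tendsto_div (s : ℕ → ℝ) {m : ℝ} (hm : m ≤ 0)
    (h : Tendsto (fun n ↦ s n / n) atTop (𝓝 m)) :
    Tendsto (fun n ↦ runningMin s n / n) atTop (𝓝 m) := by
  refine tendsto_order.2 ⟨fun a ha ↦ ?_, fun b hb ↦ ?_⟩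
  · obtain ⟨a', haa', ha'm⟩ := exists_between ha
    have hlin : ∀ᶠ n : ℕ in atTop, 0 ≤ s n - a' * n := by
      filter_upwards [h.eventually (lt_mem_nhds ha'm), eventually_gt_atTop 0] with n hn hn0
      rw [lt_div_iff₀ (by positivity)] at hn
      linarith
    obtain ⟨C, hC⟩ := (isBoundedUnder_of_eventually_ge hlin).bddBelow_range
    have hbound : ∀ n : ℕ, a' * n + C ≤ runningMin s n := fun n ↦ by
      obtain ⟨j, hjn, hj⟩ := exists_runningMin_eq s n
      have hCj : C ≤ s j - a' * j := hC ⟨j, rfl⟩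
      have : a' * n ≤ a' * j := mul_le_mul_of_nonpos_left (by exact_mod_cast hjn) (by linarith)
      linarith
    have hlim : Tendsto (fun n : ℕ ↦ a' + C / n) atTop (𝓝 a') := by
      simpa using tendsto_const_nhds.add (tendsto_const_div_atTop_nhds_zero_nat C)
    filter_upwards [hlim.eventually (lt_mem_nhds haa'), eventually_gt_atTop 0] with n hn hn0
    refine hn.trans_le ?_
    rw [le_div_iff₀ (by positivity), add_mul, div_mul_cancel₀ _ (by positivity)]
    exact hbound n
  · filter_upwards [h.eventually (gt_mem_nhds hb)] with n hn
    exact (div_le_div_of_nonneg_right (runningMin_le s le_rfl) n.cast_nonneg).trans_lt hn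

def revPrefix (k : ℕ) (l : ℕ) : ℕ := if l < k then k - 1 - l else l

lemma revPrefix_involutive (k : ℕ) : Function.Involutive (revPrefix k) := by
  intro l
  unfold revPrefix
  split_ifs <;> omega

lemma sum_range_comp_revPrefix {M : Type*} [AddCommGroup M] (x : ℕ → M) {t k : ℕ} (ht : t ≤ k) :
    ∑ l ∈ range t, x (revPrefix k l) = ∑ l ∈ range k, x l - ∑ l ∈ range (k - t), x l := by
  obtain ⟨r, rfl⟩ := Nat.exists_eq_add_of_le' ht
  rw [Nat.add_sub_cancel, sum_range_add, add_sub_cancel_left, ← sum_range_reflect]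
  refine sum_congr rfl fun l hl ↦ ?_
  have := mem_range.1 hl
  rw [revPrefix, if_pos (by omega)]
  congr 1
  omega

def staysNegUpTo (k : ℕ) : Set (ℕ → ℤ) := {x | ∀ t, 0 < t → t ≤ k → ∑ l ∈ range t, x l < 0}

def ladderEpoch (k : ℕ) : Set (ℕ → ℤ) := {x | ∀ j < k, ∑ l ∈ range k, x l < ∑ l ∈ range j, x l}

lemma neg_runningMin_partialSums_eq_card {x : ℕ → ℤ} (hx : ∀ i, -1 ≤ x i) (n : ℕ) :
    -runningMin (fun t ↦ ∑ l ∈ range t, x l) n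
      = #{k ∈ range n | ∀ j ≤ k, ∑ l ∈ range (k + 1), x l < ∑ l ∈ range j, x l} := by
  simpa using sub_runningMin_eq_card_ladder (fun t ↦ ∑ l ∈ range t, x l)
    (fun t ↦ by simp only [sum_range_succ]; linarith [hx t]) n

lemma abs_runningMin_partialSums_le {x : ℕ → ℤ} (hx : ∀ i, -1 ≤ x i) (n : ℕ) :
    |runningMin (fun t ↦ ∑ l ∈ range t, x l) n| ≤ n := by
  have hcount := neg_runningMin_partialSums_eq_card hx n
  have hcard := card_filter_le (range n)
    fun k ↦ ∀ j ≤ k, ∑ l ∈ range (k + 1), x l < ∑ l ∈ range j, x l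
  rw [card_range] at hcard
  rw [abs_le]
  omega

lemma neg_runningMin_partialSums_eq_sum_indicator {x : ℕ → ℤ} (hx : ∀ i, -1 ≤ x i) (n : ℕ) :
    -runningMin (fun t ↦ (↑(∑ l ∈ range t, x l) : ℝ)) n
      = ∑ k ∈ range n, (ladderEpoch (k + 1)).indicator 1 x := by
  rw [(Int.cast_mono (R := ℝ)).runningMin_comp (fun t ↦ ∑ l ∈ range t, x l), ← Int.cast_neg,
    neg_runningMin_partialSums_eq_card hx, Int.cast_natCast, natCast_card_filter]
  simp only [Set.indicator_apply, ladderEpoch, Set.mem_ofPred_eq, Nat.lt_succ_iff, Pi.one_apply]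

lemma ladderEpoch_eq_preimage (k : ℕ) :
    ladderEpoch k = (· ∘ revPrefix k) ⁻¹' staysNegUpTo k := by
  ext x
  simp only [ladderEpoch, staysNegUpTo, Set.mem_preimage, Set.mem_ofPred_eq, Function.comp_apply]
  constructor
  · intro h t ht htk
    rw [sum_range_comp_revPrefix x htk, sub_neg]
    exact h _ (by omega)
  · intro h j hj
    have := h (k - j) (by omega) (by omega)
    rwa [sum_range_comp_revPrefix x (by omega), Nat.sub_sub_self hj.le, sub_neg] at this

lemma measurableSet_staysNegUpTo (k : ℕ) : MeasurableSet (staysNegUpTo k) := by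
  simp only [staysNegUpTo, Set.ofPred_forall]
  exact .iInter fun t ↦ .iInter fun _ ↦ .iInter fun _ ↦
    measurableSet_lt (Finset.measurable_sum _ fun _ _ ↦ measurable_pi_apply _) measurable_const

lemma measurableSet_ladderEpoch (k : ℕ) : MeasurableSet (ladderEpoch k) := by
  rw [ladderEpoch_eq_preimage]
  exact measurable_pi_lambda _ (fun _ ↦ measurable_pi_apply _) (measurableSet_staysNegUpTo k)

lemma ProbabilityTheory.iIndepFun.identDistrib_comp_of_injective {ι Ω β : Type*}
    [MeasurableSpace Ω] {μ : Measure Ω} [IsProbabilityMeasure μ] [MeasurableSpace β]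
    {X : ι → Ω → β} {g : ι → ι} (hg : g.Injective) (hmeas : ∀ i, Measurable (X i))
    (hindep : iIndepFun X μ) (hident : ∀ i, IdentDistrib (X (g i)) (X i) μ μ) :
    IdentDistrib (fun ω i ↦ X (g i) ω) (fun ω i ↦ X i ω) μ μ where
  aemeasurable_fst := (measurable_pi_lambda _ fun i ↦ hmeas (g i)).aemeasurable
  aemeasurable_snd := (measurable_pi_lambda _ hmeas).aemeasurable
  map_eq := by
    rw [(hindep.precomp hg).map_fun_eq_infinitePi_map (fun i ↦ hmeas (g i)),
      hindep.map_fun_eq_infinitePi_map hmeas]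
    exact congrArg _ (funext fun i ↦ (hident i).map_eq)

section RandomWalk

variable {Ω : Type*} [MeasurableSpace Ω] {μ : Measure Ω} {X : ℕ → Ω → ℤ}

lemma measure_ladderEpoch_eq [IsProbabilityMeasure μ] (hmeas : ∀ n, Measurable (X n))
    (hindep : iIndepFun X μ) (hident : ∀ n, IdentDistrib (X n) (X 0) μ μ) (k : ℕ) :
    μ {ω | (X · ω) ∈ ladderEpoch k} = μ {ω | (X · ω) ∈ staysNegUpTo k} := by
  rw [ladderEpoch_eq_preimage]
  exact (hindep.identDistrib_comp_of_injective (revPrefix_involutive k).injective hmeas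
    fun i ↦ (hident _).trans (hident i).symm).measure_mem_eq (measurableSet_staysNegUpTo k)

lemma integral_neg_runningMin_walk [IsProbabilityMeasure μ] (hmeas : ∀ n, Measurable (X n))
    (hindep : iIndepFun X μ) (hident : ∀ n, IdentDistrib (X n) (X 0) μ μ)
    (hskip : ∀ᵐ ω ∂μ, ∀ i, -1 ≤ X i ω) (n : ℕ) :
    ∫ ω, -runningMin (fun t ↦ (↑(∑ l ∈ range t, X l ω) : ℝ)) n ∂μ
      = ∑ k ∈ range n, μ.real {ω | (X · ω) ∈ staysNegUpTo (k + 1)} := by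
  have hladder (k : ℕ) : MeasurableSet {ω | (X · ω) ∈ ladderEpoch k} :=
    measurable_pi_lambda _ hmeas (measurableSet_ladderEpoch k)
  have hcount : (fun ω ↦ -runningMin (fun t ↦ (↑(∑ l ∈ range t, X l ω) : ℝ)) n) =ᵐ[μ]
      fun ω ↦ ∑ k ∈ range n, {ω | (X · ω) ∈ ladderEpoch (k + 1)}.indicator 1 ω := by
    filter_upwards [hskip] with ω hω
    exact neg_runningMin_partialSums_eq_sum_indicator hω n
  rw [integral_congr_ae hcount,
    integral_finsetSum _ fun k _ ↦ (integrable_const 1).indicator (hladder (k + 1))]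
  refine sum_congr rfl fun k _ ↦ ?_
  rw [integral_indicator_one (hladder (k + 1)), measureReal_def, measureReal_def,
    measure_ladderEpoch_eq hmeas hindep hident]

lemma tendsto_integral_runningMin_walk_div [IsProbabilityMeasure μ]
    (hmeas : ∀ n, Measurable (X n)) (hindep : iIndepFun X μ)
    (hident : ∀ n, IdentDistrib (X n) (X 0) μ μ) (hskip : ∀ᵐ ω ∂μ, ∀ i, -1 ≤ X i ω)
    (hint : Integrable (fun ω ↦ (X 0 ω : ℝ)) μ) (hmean : ∫ ω, (X 0 ω : ℝ) ∂μ ≤ 0) :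
    Tendsto (fun n : ℕ ↦ ∫ ω, runningMin (fun t ↦ (↑(∑ l ∈ range t, X l ω) : ℝ)) n / n ∂μ)
      atTop (𝓝 (∫ ω, (X 0 ω : ℝ) ∂μ)) := by
  have hslln := strong_law_ae_real (fun i ω ↦ (X i ω : ℝ)) hint
    (fun i j hij ↦ (hindep.indepFun hij).comp measurable_from_top measurable_from_top)
    (fun i ↦ (hident i).comp measurable_from_top)
  have hsums (n : ℕ) : Measurable fun ω ↦ (↑(∑ l ∈ range n, X l ω) : ℝ) :=
    measurable_from_top.comp (Finset.measurable_sum _ fun l _ ↦ hmeas l)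
  have hbound (n : ℕ) : ∀ᵐ ω ∂μ,
      ‖runningMin (fun t ↦ (↑(∑ l ∈ range t, X l ω) : ℝ)) n / n‖ ≤ 1 := by
    filter_upwards [hskip] with ω hω
    rw [(Int.cast_mono (R := ℝ)).runningMin_comp (fun t ↦ ∑ l ∈ range t, X l ω), norm_div,
      RCLike.norm_natCast]
    refine div_le_one_of_le₀ ?_ n.cast_nonneg
    rw [Int.norm_cast_real, Int.norm_eq_abs]
    exact_mod_cast abs_runningMin_partialSums_le hω n
  have hlim : ∀ᵐ ω ∂μ, Tendsto
      (fun n : ℕ ↦ runningMin (fun t ↦ (↑(∑ l ∈ range t, X l ω) : ℝ)) n / n)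
      atTop (𝓝 (∫ ω, (X 0 ω : ℝ) ∂μ)) := by
    filter_upwards [hslln] with ω hω
    exact tendsto_runningMin_div_of_tendsto_div _ hmean (by simpa using hω)
  simpa using tendsto_integral_of_dominated_convergence (fun _ ↦ (1 : ℝ))
    (fun n ↦ ((Measurable.runningMin hsums n).div_const _).aestronglyMeasurable)
    (integrable_const 1) hbound hlim

lemma tendsto_measureReal_staysNegUpTo [IsFiniteMeasure μ] (hmeas : ∀ n, Measurable (X n)) :
    Tendsto (fun k ↦ μ.real {ω | (X · ω) ∈ staysNegUpTo k}) atTop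
      (𝓝 (μ.real {ω | ∀ n : ℕ, 0 < n → ∑ l ∈ range n, X l ω < 0})) := by
  have hanti : Antitone fun k ↦ {ω | (X · ω) ∈ staysNegUpTo k} :=
    fun j k hjk _ h t ht htk ↦ h t ht (htk.trans hjk)
  have hinter : ⋂ k, {ω | (X · ω) ∈ staysNegUpTo k}
      = {ω | ∀ n : ℕ, 0 < n → ∑ l ∈ range n, X l ω < 0} := by
    ext ω
    simp only [staysNegUpTo, Set.mem_iInter, Set.mem_ofPred_eq]
    exact ⟨fun h n hn ↦ h n n hn le_rfl, fun h _ n hn _ ↦ h n hn⟩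
  have hmeasurable (k : ℕ) : MeasurableSet {ω | (X · ω) ∈ staysNegUpTo k} :=
    measurable_pi_lambda _ hmeas (measurableSet_staysNegUpTo k)
  have := tendsto_measure_iInter_atTop (fun k ↦ (hmeasurable k).nullMeasurableSet) hanti
    ⟨0, measure_ne_top μ _⟩
  rw [hinter] at this
  exact (ENNReal.tendsto_toReal (measure_ne_top μ _)).comp this

end RandomWalk

/-- For a skip-free to the left random walk with integrable increments of negative mean,
the probability that the walk stays negative forever after time `0` equals minus the mean:
`ℙ[S_n < 0 for all n ≥ 1] = -E[X_0]`. -/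
theorem prob_stay_negative_eq_neg_mean {Ω : Type*} [MeasurableSpace Ω] (μ : Measure Ω)
    [IsProbabilityMeasure μ] (X : ℕ → Ω → ℤ)
    (hmeas : ∀ n, Measurable (X n))
    (hindep : iIndepFun X μ)
    (hident : ∀ n, IdentDistrib (X n) (X 0) μ μ)
    (hskip : ∀ᵐ ω ∂μ, -1 ≤ X 0 ω)
    (hint : Integrable (fun ω => (X 0 ω : ℝ)) μ)
    (hmean : ∫ ω, (X 0 ω : ℝ) ∂μ < 0) :
    (μ {ω | ∀ n : ℕ, 0 < n → ∑ l ∈ Finset.range n, X l ω < 0}).toReal =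
      -∫ ω, (X 0 ω : ℝ) ∂μ := by
  have hskip_all : ∀ᵐ ω ∂μ, ∀ i, -1 ≤ X i ω :=
    ae_all_iff.2 fun i ↦ (hident i).symm.ae_snd (p := (-1 ≤ ·)) .of_discrete hskip
  have hcesaro :=
    ((tendsto_measureReal_staysNegUpTo (μ := μ) hmeas).comp (tendsto_add_atTop_nat 1)).cesaro
  refine tendsto_nhds_unique hcesaro ?_
  refine (tendsto_integral_runningMin_walk_div hmeas hindep hident hskip_all hint
    hmean.le).neg.congr fun n ↦ ?_
  rw [integral_div, Function.comp_def,
    ← integral_neg_runningMin_walk hmeas hindep hident hskip_all n, integral_neg]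
  ring
end
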